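/- Let G be an abelian group. (1) If G is not a torsion group (i.e. G contains an element of infinite order), then Δ*(B±(G)) = ℕ. (2) If G is a torsion group, then Δ*(B±(G)) = ⋃_{G'} Δ*(B±(G')), where the union is over all finite subgroups G' of G. -/

import Mathlib

open Multiset

variable {G : Type*} [AddCommGroup G]

/-- `S` is a plus-minus weighted zero-sum sequence: `S` splits as `S₁ + S₂` with
`S₁.sum = S₂.sum`, i.e. some choice of signs `ε_i ∈ {+1, -1}` makes the weighted sum vanish. -/
def IsPMZeroSum (S : Multiset G) : Prop :=
  ∃ S₁ S₂ : Multiset G, S = S₁ + S₂ ∧ S₁.sum = S₂.sum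

/-- The monoid `B±(G₀)` of plus-minus weighted zero-sum sequences over `G₀ ⊆ G`, as an
additive submonoid of the free commutative monoid `Multiset G` of sequences over `G`. -/
def PMZS (G₀ : Set G) : AddSubmonoid (Multiset G) where
  carrier := {S | (∀ g ∈ S, g ∈ G₀) ∧ IsPMZeroSum S}
  zero_mem' := ⟨fun g hg => absurd hg (Multiset.notMem_zero g), 0, 0, by simp, rfl⟩
  add_mem' := by
    rintro S T ⟨hS, S₁, S₂, rfl, h12⟩ ⟨hT, T₁, T₂, rfl, h34⟩
    exact ⟨fun g hg => (Multiset.mem_add.mp hg).elim (fun h => hS g h) (fun h => hT g h),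
      S₁ + T₁, S₂ + T₂, add_add_add_comm S₁ S₂ T₁ T₂, by simp [h12, h34]⟩

/-- `A` is an atom (irreducible element) of the submonoid `H` of `Multiset G`. -/
def IsPMAtom (H : AddSubmonoid (Multiset G)) (A : Multiset G) : Prop :=
  A ∈ H ∧ A ≠ 0 ∧ ∀ B C : Multiset G, B ∈ H → C ∈ H → A = B + C → B = 0 ∨ C = 0

/-- The set of lengths `L(a)` of `a` in `H`: all `k` such that `a` is a sum of `k` atoms of `H`. -/
def LengthSet (H : AddSubmonoid (Multiset G)) (a : Multiset G) : Set ℕ :=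
  {k | ∃ l : List (Multiset G), (∀ A ∈ l, IsPMAtom H A) ∧ l.sum = a ∧ l.length = k}

/-- The set of successive distances `Δ(L)` of a set `L ⊆ ℕ`. -/
def DistSet (L : Set ℕ) : Set ℕ :=
  {d | 0 < d ∧ ∃ a ∈ L, a + d ∈ L ∧ ∀ b ∈ L, a < b → a + d ≤ b}

/-- The set of distances `Δ(H) = ⋃_{a ∈ H} Δ(L(a))`. -/
def DeltaM (H : AddSubmonoid (Multiset G)) : Set ℕ :=
  {d | ∃ a ∈ H, d ∈ DistSet (LengthSet H a)}

/-- `a` divides `b` in `H`. -/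
def DvdIn (H : AddSubmonoid (Multiset G)) (a b : Multiset G) : Prop :=
  ∃ c ∈ H, b = a + c

/-- `S` is a divisor-closed submonoid of `H`. -/
def IsDivClosed (H S : AddSubmonoid (Multiset G)) : Prop :=
  S ≤ H ∧ ∀ s ∈ S, ∀ a ∈ H, DvdIn H a s → a ∈ S

/-- The set of minimal distances
`Δ*(H) = {min Δ(S) : S a divisor-closed submonoid of H with Δ(S) ≠ ∅}`. -/
def DeltaStar (H : AddSubmonoid (Multiset G)) : Set ℕ :=
  {d | ∃ S : AddSubmonoid (Multiset G), IsDivClosed H S ∧ (DeltaM S).Nonempty ∧ d = sInf (DeltaM S)}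

/-- The set of lengths of atoms of `H`. -/
def AtomLengths (H : AddSubmonoid (Multiset G)) : Set ℕ :=
  {n | ∃ A : Multiset G, IsPMAtom H A ∧ Multiset.card A = n}

/-- The Davenport constant `D(H)` of `H`: the supremum of the lengths of the atoms of `H`.  -/
noncomputable def DavD (H : AddSubmonoid (Multiset G)) : ℕ :=
  sSup (AtomLengths H)

/-- The system of sets of lengths `L(H)` of `H`. -/
def LSys (H : AddSubmonoid (Multiset G)) : Set (Set ℕ) :=
  {L | ∃ a ∈ H, L = LengthSet H a}

/-- `d` is the greatest common divisor of the set `S` of integers. -/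
def IsSetGCD (S : Set ℤ) (d : ℕ) : Prop :=
  (∀ x ∈ S, (d : ℤ) ∣ x) ∧ ∀ c : ℕ, (∀ x ∈ S, (c : ℤ) ∣ x) → c ∣ d

/-- A family `e` of elements of an abelian group is independent if `∑ c i • e i = 0`
with integer coefficients implies `c i • e i = 0` for each `i`. -/
def IsIndepFamily {k : ℕ} (e : Fin k → G) : Prop :=
  ∀ c : Fin k → ℤ, ∑ i, c i • e i = 0 → ∀ i, c i • e i = 0

/-- The (classical) Davenport constant of the abelian group `G`: the smallest `ℓ` such that
every sequence over `G` of length at least `ℓ` has a nonempty zero-sum subsequence. -/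
noncomputable def DavenportGroup (G : Type*) [AddCommGroup G] : ℕ :=
  sInf {ℓ | ∀ S : Multiset G, ℓ ≤ Multiset.card S → ∃ T, T ≤ S ∧ T ≠ 0 ∧ T.sum = 0}


/-! If `g` has infinite order and `n ≥ 2`, the atoms of `B±({n • g, g})` are `(n • g)^2`, `g^2`
and `(n • g) g^n`. A factorization of `S` using `t` atoms of the last kind has length
`(|S| - (n - 1) t) / 2`, and `t` has the parity of the multiplicity of `n • g` in `S`; hence
distinct lengths differ by at least `n - 1`, and
`(n • g)^2 g^(2n) = ((n • g) g^n)^2 = (n • g)^2 (g^2)^n` realises `n - 1`. As `B±(G₀)` is divisor-closed in `B±(G)`, every `d ≥ 1` lies in `Δ*(B±(G))`.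

If `min Δ(S)` is attained at `a ∈ S`, it is also the minimal distance of the divisor-closed
submonoid generated by `a`, which is divisor-closed in `B±(G')` for the subgroup `G'` generated by
the support of `a`; in a torsion group `G'` is finite. -/

section DivisorClosed

variable {α : Type*} {H S T : AddSubmonoid (Multiset α)}

theorem DvdIn.trans {a b c : Multiset α} (hab : DvdIn H a b) (hbc : DvdIn H b c) :
    DvdIn H a c := by
  obtain ⟨u, hu, rfl⟩ := hab
  obtain ⟨v, hv, rfl⟩ := hbc
  exact ⟨u + v, H.add_mem hu hv, add_assoc _ _ _⟩

theorem IsDivClosed.trans (hST : IsDivClosed T S) (hTH : IsDivClosed H T) : IsDivClosed H S := by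
  refine ⟨hST.1.trans hTH.1, fun s hs a ha ⟨c, hc, hsac⟩ => hST.2 s hs a ?_ ⟨c, ?_, hsac⟩⟩
  · exact hTH.2 s (hST.1 hs) a ha ⟨c, hc, hsac⟩
  · exact hTH.2 s (hST.1 hs) c hc ⟨a, ha, hsac.trans (add_comm a c)⟩

theorem IsDivClosed.of_le (hS : IsDivClosed H S) (hST : S ≤ T) (hTH : T ≤ H) :
    IsDivClosed T S :=
  ⟨hST, fun s hs a ha ⟨c, hc, hsac⟩ => hS.2 s hs a (hTH ha) ⟨c, hTH hc, hsac⟩⟩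

theorem IsDivClosed.isPMAtom_iff (hS : IsDivClosed H S) {A : Multiset α} (hA : A ∈ S) :
    IsPMAtom S A ↔ IsPMAtom H A := by
  refine ⟨fun ⟨_, hA0, hirr⟩ => ⟨hS.1 hA, hA0, fun B C hB hC hABC => ?_⟩,
    fun ⟨_, hA0, hirr⟩ => ⟨hA, hA0, fun B C hB hC => hirr B C (hS.1 hB) (hS.1 hC)⟩⟩
  exact hirr B C (hS.2 A hA B hB ⟨C, hC, hABC⟩)
    (hS.2 A hA C hC ⟨B, hB, hABC.trans (add_comm B C)⟩) hABC

theorem IsDivClosed.lengthSet_eq (hS : IsDivClosed H S) {x : Multiset α} (hx : x ∈ S) :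
    LengthSet S x = LengthSet H x := by
  classical
  ext k
  refine exists_congr fun l => and_congr_left fun ⟨hlx, _⟩ =>
    ⟨fun hlS A hA => (hS.isPMAtom_iff (hlS A hA).1).1 (hlS A hA), fun hlH A hA => ?_⟩
  have hrest : (l.erase A).sum ∈ H :=
    H.list_sum_mem fun B hB => (hlH B (List.mem_of_mem_erase hB)).1
  have hxA : x = A + (l.erase A).sum := by
    rw [← hlx, (List.perm_cons_erase hA).sum_eq, List.sum_cons]
  exact (hS.isPMAtom_iff (hS.2 x hx A (hlH A hA).1 ⟨_, hrest, hxA⟩)).2 (hlH A hA)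

theorem IsDivClosed.deltaM_subset (hS : IsDivClosed H S) : DeltaM S ⊆ DeltaM H :=
  fun _ ⟨x, hx, hd⟩ => ⟨x, hS.1 hx, hS.lengthSet_eq hx ▸ hd⟩

theorem IsDivClosed.deltaStar_subset (hS : IsDivClosed H S) : DeltaStar S ⊆ DeltaStar H :=
  fun _ ⟨T, hT, hne, hd⟩ => ⟨T, hT.trans hS, hne, hd⟩

theorem pos_of_mem_deltaStar {d : ℕ} (hd : d ∈ DeltaStar H) : 0 < d := by
  obtain ⟨S, -, hne, rfl⟩ := hd
  obtain ⟨_, -, hpos, -⟩ := Nat.sInf_mem hne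
  exact hpos

def divClosure (H : AddSubmonoid (Multiset α)) (a : Multiset α) : AddSubmonoid (Multiset α) where
  carrier := {x | x ∈ H ∧ ∃ k : ℕ, DvdIn H x (k • a)}
  zero_mem' := ⟨H.zero_mem, 0, 0, H.zero_mem, by simp⟩
  add_mem' := by
    rintro x y ⟨hx, k, c, hc, hkc⟩ ⟨hy, k', c', hc', hkc'⟩
    refine ⟨H.add_mem hx hy, k + k', c + c', H.add_mem hc hc', ?_⟩
    rw [add_smul, hkc, hkc']
    abel

theorem isDivClosed_divClosure (a : Multiset α) : IsDivClosed H (divClosure H a) :=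
  ⟨fun _ hx => hx.1, fun _ ⟨_, k, hk⟩ _ hy hys => ⟨hy, k, hys.trans hk⟩⟩

theorem mem_divClosure_self {a : Multiset α} (ha : a ∈ H) : a ∈ divClosure H a :=
  ⟨ha, 1, 0, H.zero_mem, by simp⟩

theorem IsDivClosed.divClosure_le (hS : IsDivClosed H S) {a : Multiset α} (ha : a ∈ S) :
    divClosure H a ≤ S :=
  fun x ⟨hx, k, hk⟩ => hS.2 _ (S.nsmul_mem ha k) x hx hk

theorem IsDivClosed.refl (S : AddSubmonoid (Multiset α)) : IsDivClosed S S :=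
  ⟨le_rfl, fun _ _ _ ha _ => ha⟩

theorem exists_mem_deltaStar_divClosure {d : ℕ} (hd : d ∈ DeltaStar H) :
    ∃ a, d ∈ DeltaStar (divClosure H a) := by
  obtain ⟨S, hS, hne, rfl⟩ := hd
  obtain ⟨a, haS, hdist⟩ := Nat.sInf_mem hne
  have hS' : IsDivClosed S (divClosure H a) :=
    (isDivClosed_divClosure a).of_le (hS.divClosure_le haS) hS.1
  have hmem : sInf (DeltaM S) ∈ DeltaM (divClosure H a) :=
    ⟨a, mem_divClosure_self (hS.1 haS), hS'.lengthSet_eq (mem_divClosure_self (hS.1 haS)) ▸ hdist⟩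
  refine ⟨a, _, .refl _, ⟨_, hmem⟩, le_antisymm ?_ (Nat.sInf_le hmem)⟩
  exact le_csInf ⟨_, hmem⟩ fun e he => Nat.sInf_le (hS'.deltaM_subset he)

end DivisorClosed

section DistSet

variable {L : Set ℕ} {m : ℕ}

theorem le_of_mem_distSet (hgap : ∀ k₁ ∈ L, ∀ k₂ ∈ L, k₁ < k₂ → k₁ + m ≤ k₂) {d : ℕ}
    (hd : d ∈ DistSet L) : m ≤ d := by
  obtain ⟨hd0, k, hk, hkd, -⟩ := hd
  have := hgap k hk (k + d) hkd (by omega)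
  omega

theorem mem_distSet_of_gap (hm : 0 < m) (hgap : ∀ k₁ ∈ L, ∀ k₂ ∈ L, k₁ < k₂ → k₁ + m ≤ k₂)
    {k : ℕ} (hk : k ∈ L) (hkm : k + m ∈ L) : m ∈ DistSet L :=
  ⟨hm, k, hk, hkm, hgap k hk⟩

end DistSet

theorem isDivClosed_pmzs_of_subset {G₀ G₁ : Set G} (h : G₀ ⊆ G₁) :
    IsDivClosed (PMZS G₁) (PMZS G₀) :=
  ⟨fun _ hS => ⟨fun g hg => h (hS.1 g hg), hS.2⟩,
    fun _ hs _ ha ⟨_, _, hsac⟩ => ⟨fun g hg => hs.1 g (hsac ▸ mem_add.2 (Or.inl hg)), ha.2⟩⟩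

theorem divClosure_pmzs_le {G₀ G₁ : Set G} {a : Multiset G} (ha : ∀ g ∈ a, g ∈ G₀) :
    divClosure (PMZS G₁) a ≤ PMZS G₀ := by
  rintro x ⟨hx, k, c, -, hkc⟩
  exact ⟨fun g hg => ha g (mem_of_mem_nsmul (hkc ▸ mem_add.2 (Or.inl hg))), hx.2⟩

theorem IsAddTorsion.finite_closure (tG : IsAddTorsion G) {s : Set G} (hs : s.Finite) :
    ((AddSubgroup.closure s : AddSubgroup G) : Set G).Finite := by
  have : Finite s := hs
  have := AddCommGroup.finite_of_fg_isAddTorsion _ (tG.addSubgroup (AddSubgroup.closure s))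
  exact Set.toFinite _

theorem deltaStar_pmzs_univ_of_isAddTorsion (tG : IsAddTorsion G) :
    DeltaStar (PMZS (Set.univ : Set G)) =
      {d : ℕ | ∃ G' : AddSubgroup G, (G' : Set G).Finite ∧ d ∈ DeltaStar (PMZS (G' : Set G))} := by
  ext d
  refine ⟨fun hd => ?_, fun ⟨G', _, hd⟩ =>
    (isDivClosed_pmzs_of_subset (Set.subset_univ _)).deltaStar_subset hd⟩
  obtain ⟨a, hd⟩ := exists_mem_deltaStar_divClosure hd
  let G' := AddSubgroup.closure {g | g ∈ a}
  have hG' : IsDivClosed (PMZS (G' : Set G)) (divClosure (PMZS Set.univ) a) :=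
    (isDivClosed_divClosure a).of_le (divClosure_pmzs_le fun _ hg => AddSubgroup.subset_closure hg)
      (isDivClosed_pmzs_of_subset (Set.subset_univ _)).1
  exact ⟨G', tG.finite_closure a.finite_toSet, hG'.deltaStar_subset hd⟩

/-- For `g` of infinite order, `(n • g)^a g^b` is a plus-minus weighted zero-sum sequence iff
`IsPMPair n (a, b)` (`pairSeq_mem_pmzs_iff_isPMPair`). -/
def IsPMPair (n : ℕ) (v : ℕ × ℕ) : Prop := Even (v.1 * n + v.2) ∧ (Odd v.1 → n ≤ v.2)

section IsPMPair

variable {n : ℕ} {u v w : ℕ × ℕ}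

theorem isPMPair_iff_exists :
    IsPMPair n v ↔ ∃ u w, u + w = v ∧ u.1 * n + u.2 = w.1 * n + w.2 := by
  obtain ⟨a, b⟩ := v
  constructor
  · rintro ⟨heven, hodd⟩
    rcases Nat.even_or_odd a with ⟨k, rfl⟩ | ⟨k, rfl⟩
    · obtain ⟨m, rfl⟩ : Even b := by simpa [parity_simps] using heven
      exact ⟨(k, m), (k, m), rfl, rfl⟩
    · obtain ⟨c, rfl⟩ := Nat.exists_eq_add_of_le (hodd ⟨k, rfl⟩)
      obtain ⟨m, rfl⟩ : Even c := by
        have : (2 * k + 1) * n + (n + c) = 2 * ((k + 1) * n) + c := by ring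
        simpa [this, parity_simps] using heven
      exact ⟨(k, n + m), (k + 1, m), by simp only [Prod.mk_add_mk]; ring_nf, by ring⟩
  · rintro ⟨⟨p, q⟩, ⟨p', q'⟩, huw, h⟩
    simp only [Prod.mk_add_mk, Prod.mk.injEq] at huw h
    obtain ⟨rfl, rfl⟩ := huw
    refine ⟨⟨p * n + q, by rw [add_mul]; omega⟩, fun hodd => ?_⟩
    rcases lt_trichotomy p p' with hlt | rfl | hgt
    · obtain ⟨r, rfl⟩ := Nat.exists_eq_add_of_lt hlt
      dsimp only
      nlinarith
    · exact absurd hodd (by simp)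
    · obtain ⟨r, rfl⟩ := Nat.exists_eq_add_of_lt hgt
      dsimp only
      nlinarith

theorem isPMPair_of_even {a b : ℕ} (ha : Even a) (hb : Even b) : IsPMPair n (a, b) :=
  ⟨(ha.mul_right n).add hb, fun h => absurd ha (Nat.not_even_iff_odd.2 h)⟩

theorem isPMPair_one_self : IsPMPair n (1, n) :=
  ⟨by simp [← two_mul], fun _ => le_rfl⟩

theorem IsPMPair.exists_add_of_notMem (hv : IsPMPair n v)
    (hv' : v ∉ ({0, (2, 0), (0, 2), (1, n)} : Set (ℕ × ℕ))) :
    ∃ u w, IsPMPair n u ∧ IsPMPair n w ∧ u + w = v ∧ u ≠ 0 ∧ w ≠ 0 := by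
  obtain ⟨a, b⟩ := v
  obtain ⟨heven, hodd⟩ := hv
  simp only [Set.mem_insert_iff, Set.mem_singleton_iff, Prod.ext_iff, Prod.fst_zero,
    Prod.snd_zero, not_or] at hv'
  suffices ∃ a₁ b₁ a₂ b₂, IsPMPair n (a₁, b₁) ∧ IsPMPair n (a₂, b₂) ∧ a₁ + a₂ = a ∧
      b₁ + b₂ = b ∧ (a₁ ≠ 0 ∨ b₁ ≠ 0) ∧ (a₂ ≠ 0 ∨ b₂ ≠ 0) by
    obtain ⟨a₁, b₁, a₂, b₂, h₁, h₂, rfl, rfl, h₁0, h₂0⟩ := this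
    exact ⟨(a₁, b₁), (a₂, b₂), h₁, h₂, rfl, by simpa [Prod.ext_iff, or_iff_not_and_not] using h₁0,
      by simpa [Prod.ext_iff, or_iff_not_and_not] using h₂0⟩
  rcases Nat.even_or_odd a with ⟨k, hk⟩ | ⟨k, hk⟩
  · obtain ⟨m, hm⟩ : Even b := by simpa [parity_simps, hk] using heven
    rcases Nat.eq_zero_or_pos k with rfl | hk0
    · exact ⟨0, 2, 0, b - 2, isPMPair_of_even .zero even_two,
        isPMPair_of_even .zero ⟨m - 1, by omega⟩, by omega, by omega, by omega, by omega⟩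
    · exact ⟨2, 0, a - 2, b, isPMPair_of_even even_two .zero,
        isPMPair_of_even ⟨k - 1, by omega⟩ ⟨m, hm⟩, by omega, by omega, by omega, by omega⟩
  · have hnb := hodd ⟨k, hk⟩
    obtain ⟨m, hm⟩ : Even (b - n) := by
      have : a * n + b = 2 * ((k + 1) * n) + (b - n) := by subst hk; zify [hnb]; ring
      simpa [this, parity_simps] using heven
    exact ⟨1, n, a - 1, b - n, isPMPair_one_self, isPMPair_of_even ⟨k, by omega⟩ ⟨m, hm⟩,
      by omega, by omega, by omega, by omega⟩

theorem IsPMPair.eq_zero_or_eq_zero_of_add_eq (hn : 0 < n)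
    (hv : v ∈ ({(2, 0), (0, 2), (1, n)} : Set (ℕ × ℕ))) (hu : IsPMPair n u) (hw : IsPMPair n w)
    (huw : u + w = v) : u = 0 ∨ w = 0 := by
  obtain ⟨a₁, b₁⟩ := u
  obtain ⟨a₂, b₂⟩ := w
  simp only [Set.mem_insert_iff, Set.mem_singleton_iff] at hv
  rcases hv with rfl | rfl | rfl <;> simp only [Prod.mk_add_mk, Prod.mk.injEq] at huw <;>
    obtain ⟨ha, hb⟩ := huw <;> simp only [Prod.mk_eq_zero]
  · obtain ⟨rfl, rfl⟩ : b₁ = 0 ∧ b₂ = 0 := by omega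
    have h₁ := hu.2
    have : a₁ ≤ 2 := by omega
    interval_cases a₁ <;> simp_all
  · obtain ⟨rfl, rfl⟩ : a₁ = 0 ∧ a₂ = 0 := by omega
    have h₁ := hu.1
    have : b₁ ≤ 2 := by omega
    interval_cases b₁ <;> simp_all
  · rcases Nat.add_eq_one_iff.1 ha with ⟨rfl, rfl⟩ | ⟨rfl, rfl⟩
    · exact Or.inl ⟨rfl, by have := hw.2 odd_one; omega⟩
    · exact Or.inr ⟨rfl, by have := hu.2 odd_one; omega⟩

end IsPMPair

section PairSeq

variable {α : Type*} {x y : α}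

def pairSeq (x y : α) : ℕ × ℕ →+ Multiset α :=
  (replicateAddMonoidHom x).comp (AddMonoidHom.fst ℕ ℕ) +
    (replicateAddMonoidHom y).comp (AddMonoidHom.snd ℕ ℕ)

theorem pairSeq_apply (v : ℕ × ℕ) : pairSeq x y v = replicate v.1 x + replicate v.2 y := rfl

theorem count_pairSeq_left [DecidableEq α] (hxy : x ≠ y) (v : ℕ × ℕ) :
    count x (pairSeq x y v) = v.1 := by
  simp [pairSeq_apply, count_replicate, hxy.symm]

theorem count_pairSeq_right [DecidableEq α] (hxy : x ≠ y) (v : ℕ × ℕ) :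
    count y (pairSeq x y v) = v.2 := by
  simp [pairSeq_apply, count_replicate, hxy]

theorem pairSeq_injective (hxy : x ≠ y) : Function.Injective (pairSeq x y) := fun u v huv => by
  classical
  exact Prod.ext (by simpa [count_pairSeq_left hxy] using congrArg (count x) huv)
    (by simpa [count_pairSeq_right hxy] using congrArg (count y) huv)

theorem mem_pair_of_mem_pairSeq {v : ℕ × ℕ} {z : α} (hz : z ∈ pairSeq x y v) :
    z ∈ ({x, y} : Set α) := by
  simp only [pairSeq_apply, mem_add, mem_replicate] at hz
  rcases hz with ⟨-, rfl⟩ | ⟨-, rfl⟩ <;> simp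

theorem exists_pairSeq_eq (hxy : x ≠ y) {S : Multiset α} (hS : ∀ z ∈ S, z ∈ ({x, y} : Set α)) :
    ∃ v, pairSeq x y v = S := by
  classical
  refine ⟨(count x S, count y S), ext.2 fun z => ?_⟩
  by_cases hzx : z = x
  · simp [pairSeq_apply, hzx, count_replicate, hxy.symm]
  by_cases hzy : z = y
  · simp [pairSeq_apply, hzy, count_replicate, hxy]
  have : z ∉ S := fun hz => by rcases hS z hz with h | h <;> contradiction
  simp [pairSeq_apply, count_replicate, Ne.symm hzx, Ne.symm hzy, count_eq_zero_of_notMem this]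

end PairSeq

theorem sum_pairSeq (x y : G) (v : ℕ × ℕ) : (pairSeq x y v).sum = v.1 • x + v.2 • y := by
  simp [pairSeq_apply]

theorem pairSeq_mem_pmzs_iff {x y : G} (hxy : x ≠ y) {v : ℕ × ℕ} :
    pairSeq x y v ∈ PMZS {x, y} ↔
      ∃ u w, u + w = v ∧ (pairSeq x y u).sum = (pairSeq x y w).sum := by
  constructor
  · rintro ⟨-, S₁, S₂, hS, hsum⟩
    obtain ⟨u, rfl⟩ := exists_pairSeq_eq hxy fun z hz =>
      mem_pair_of_mem_pairSeq (hS ▸ mem_add.2 (Or.inl hz))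
    obtain ⟨w, rfl⟩ := exists_pairSeq_eq hxy fun z hz =>
      mem_pair_of_mem_pairSeq (hS ▸ mem_add.2 (Or.inr hz))
    exact ⟨u, w, pairSeq_injective hxy (by rw [AddMonoidHom.map_add, hS]), hsum⟩
  · rintro ⟨u, w, rfl, hsum⟩
    exact ⟨fun _ => mem_pair_of_mem_pairSeq, _, _, (pairSeq _ _).map_add u w, hsum⟩

section InfiniteOrder

variable {g : G} {n : ℕ}

theorem nsmul_ne_self_of_addOrderOf_eq_zero (hg : addOrderOf g = 0) (hn : n ≠ 1) : n • g ≠ g :=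
  fun h => hn ((nsmul_inj_iff_of_addOrderOf_eq_zero hg).1 (h.trans (one_nsmul g).symm))

theorem pairSeq_mem_pmzs_iff_isPMPair (hg : addOrderOf g = 0) (hn : n ≠ 1) {v : ℕ × ℕ} :
    pairSeq (n • g) g v ∈ PMZS {n • g, g} ↔ IsPMPair n v := by
  simp only [pairSeq_mem_pmzs_iff (nsmul_ne_self_of_addOrderOf_eq_zero hg hn), sum_pairSeq,
    smul_smul, ← add_smul, nsmul_inj_iff_of_addOrderOf_eq_zero hg, isPMPair_iff_exists]

theorem isPMAtom_pmzs_iff (hg : addOrderOf g = 0) (hn : 2 ≤ n) {A : Multiset G} :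
    IsPMAtom (PMZS {n • g, g}) A ↔
      ∃ v ∈ ({(2, 0), (0, 2), (1, n)} : Set (ℕ × ℕ)), pairSeq (n • g) g v = A := by
  have hne : n • g ≠ g := nsmul_ne_self_of_addOrderOf_eq_zero hg (by omega)
  have hmem (v : ℕ × ℕ) := pairSeq_mem_pmzs_iff_isPMPair hg (n := n) (v := v) (by omega)
  have hzero {v : ℕ × ℕ} : pairSeq (n • g) g v = 0 ↔ v = 0 :=
    (pairSeq_injective hne).eq_iff' (pairSeq _ _).map_zero
  constructor
  · rintro ⟨hA, hA0, hirr⟩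
    obtain ⟨v, rfl⟩ := exists_pairSeq_eq hne hA.1
    by_contra hv
    have hv' : v ∉ ({0, (2, 0), (0, 2), (1, n)} : Set (ℕ × ℕ)) := by
      rintro (rfl | hv'')
      · exact hA0 (pairSeq _ _).map_zero
      · exact hv ⟨v, hv'', rfl⟩
    obtain ⟨u, w, hu, hw, rfl, hu0, hw0⟩ := ((hmem v).1 hA).exists_add_of_notMem hv'
    rcases hirr _ _ ((hmem u).2 hu) ((hmem w).2 hw) ((pairSeq _ _).map_add u w) with h | h
    · exact hu0 (hzero.1 h)
    · exact hw0 (hzero.1 h)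
  · rintro ⟨v, hv, rfl⟩
    refine ⟨(hmem v).2 ?_, fun h => ?_, fun B C hB hC hBC => ?_⟩
    · rcases hv with rfl | rfl | rfl
      exacts [isPMPair_of_even even_two .zero, isPMPair_of_even .zero even_two, isPMPair_one_self]
    · have := hzero.1 h
      rcases hv with rfl | rfl | rfl <;> simp [Prod.ext_iff] at this
    · obtain ⟨u, rfl⟩ := exists_pairSeq_eq hne hB.1
      obtain ⟨w, rfl⟩ := exists_pairSeq_eq hne hC.1
      rcases IsPMPair.eq_zero_or_eq_zero_of_add_eq (by omega) hv ((hmem u).1 hB) ((hmem w).1 hC)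
        (pairSeq_injective hne (by rw [AddMonoidHom.map_add, hBC])) with rfl | rfl
      exacts [Or.inl (pairSeq _ _).map_zero, Or.inr (pairSeq _ _).map_zero]

theorem exists_pairSeq_eq_sum_of_isPMAtom (hg : addOrderOf g = 0) (hn : 2 ≤ n)
    {l : List (Multiset G)} (hl : ∀ A ∈ l, IsPMAtom (PMZS {n • g, g}) A) :
    ∃ v t, pairSeq (n • g) g v = l.sum ∧ v.1 + v.2 = 2 * l.length + (n - 1) * t ∧
      v.1 % 2 = t % 2 := by
  induction l with
  | nil => exact ⟨0, 0, by simp, by simp, rfl⟩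
  | cons A l ih =>
    obtain ⟨v, t, hv, hcard, hpar⟩ := ih fun B hB => hl B (List.mem_cons_of_mem A hB)
    obtain ⟨v₀, hv₀, rfl⟩ := (isPMAtom_pmzs_iff hg hn).1 (hl A List.mem_cons_self)
    obtain ⟨t₀, hcard₀, hpar₀⟩ : ∃ t₀, v₀.1 + v₀.2 = 2 + (n - 1) * t₀ ∧ v₀.1 % 2 = t₀ % 2 := by
      rcases hv₀ with rfl | rfl | rfl
      exacts [⟨0, rfl, rfl⟩, ⟨0, rfl, rfl⟩, ⟨1, by simp only [mul_one]; omega, rfl⟩]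
    refine ⟨v₀ + v, t₀ + t, by rw [AddMonoidHom.map_add, hv, List.sum_cons], ?_, ?_⟩
    · simp only [Prod.fst_add, Prod.snd_add, List.length_cons, mul_add]
      omega
    · simp only [Prod.fst_add]
      omega

theorem add_le_of_mem_lengthSet (hg : addOrderOf g = 0) (hn : 2 ≤ n) {x : Multiset G}
    {k₁ k₂ : ℕ} (hk₁ : k₁ ∈ LengthSet (PMZS {n • g, g}) x)
    (hk₂ : k₂ ∈ LengthSet (PMZS {n • g, g}) x) (hlt : k₁ < k₂) : k₁ + (n - 1) ≤ k₂ := by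
  obtain ⟨l₁, hl₁, rfl, rfl⟩ := hk₁
  obtain ⟨l₂, hl₂, hsum, rfl⟩ := hk₂
  obtain ⟨v₁, t₁, hv₁, hcard₁, hpar₁⟩ := exists_pairSeq_eq_sum_of_isPMAtom hg hn hl₁
  obtain ⟨v₂, t₂, hv₂, hcard₂, hpar₂⟩ := exists_pairSeq_eq_sum_of_isPMAtom hg hn hl₂
  have hne : n • g ≠ g := nsmul_ne_self_of_addOrderOf_eq_zero hg (by omega)
  obtain rfl : v₁ = v₂ := pairSeq_injective hne (by rw [hv₁, hv₂, hsum])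
  have ht : t₂ < t₁ := by
    by_contra! h
    nlinarith [Nat.mul_le_mul_left (n - 1) h]
  obtain ⟨r, rfl⟩ : ∃ r, t₁ = t₂ + 2 + r := ⟨t₁ - t₂ - 2, by omega⟩
  nlinarith

theorem isLeast_deltaM_pmzs (hg : addOrderOf g = 0) (hn : 2 ≤ n) :
    IsLeast (DeltaM (PMZS {n • g, g})) (n - 1) := by
  have hgap (x : Multiset G) : ∀ k₁ ∈ LengthSet (PMZS {n • g, g}) x,
      ∀ k₂ ∈ LengthSet (PMZS {n • g, g}) x, k₁ < k₂ → k₁ + (n - 1) ≤ k₂ :=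
    fun _ hk₁ _ hk₂ => add_le_of_mem_lengthSet hg hn hk₁ hk₂
  have hatom {v : ℕ × ℕ} (hv : v ∈ ({(2, 0), (0, 2), (1, n)} : Set (ℕ × ℕ))) :
      IsPMAtom (PMZS {n • g, g}) (pairSeq (n • g) g v) :=
    (isPMAtom_pmzs_iff hg hn).2 ⟨v, hv, rfl⟩
  refine ⟨⟨pairSeq (n • g) g (2, 2 * n), ?_, mem_distSet_of_gap (by omega) (hgap _) (k := 2) ?_ ?_⟩,
    fun d ⟨x, _, hd⟩ => le_of_mem_distSet (hgap x) hd⟩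
  · exact (pairSeq_mem_pmzs_iff_isPMPair hg (by omega)).2
      (isPMPair_of_even even_two (even_two_mul n))
  · refine ⟨[pairSeq (n • g) g (1, n), pairSeq (n • g) g (1, n)], ?_, ?_, rfl⟩
    · simp only [List.mem_cons, List.not_mem_nil, or_false, or_self, forall_eq]
      exact hatom (by simp)
    · simp [← AddMonoidHom.map_add, two_mul]
  · refine ⟨pairSeq (n • g) g (2, 0) :: List.replicate n (pairSeq (n • g) g (0, 2)), ?_, ?_, ?_⟩
    · simp only [List.mem_cons, List.mem_replicate]
      rintro A (rfl | ⟨-, rfl⟩) <;> exact hatom (by simp)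
    · simp [← AddMonoidHom.map_nsmul, ← AddMonoidHom.map_add, mul_comm]
    · simp only [List.length_cons, List.length_replicate]
      omega

end InfiniteOrder

theorem deltaStar_pmzs_univ_of_addOrderOf_eq_zero {g : G} (hg : addOrderOf g = 0) :
    DeltaStar (PMZS (Set.univ : Set G)) = {d | 0 < d} := by
  ext d
  refine ⟨pos_of_mem_deltaStar, fun hd => ?_⟩
  have hleast := isLeast_deltaM_pmzs hg (n := d + 1) (Nat.succ_le_succ hd)
  rw [Nat.add_sub_cancel] at hleast
  exact ⟨_, isDivClosed_pmzs_of_subset (Set.subset_univ _), ⟨_, hleast.1⟩, hleast.csInf_eq.symm⟩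

/-- (1) If `G` contains an element of infinite order, then `Δ*(B±(G)) = ℕ` (the positive
integers). (2) If `G` is a torsion group, then `Δ*(B±(G))` is the union of `Δ*(B±(G'))`
over all finite subgroups `G'` of `G`. -/
theorem stmt_17 (G : Type*) [AddCommGroup G] :
    ((∃ g : G, addOrderOf g = 0) →
      DeltaStar (PMZS (Set.univ : Set G)) = {d : ℕ | 0 < d}) ∧
    ((∀ g : G, addOrderOf g ≠ 0) →
      DeltaStar (PMZS (Set.univ : Set G)) =
        {d : ℕ | ∃ G' : AddSubgroup G, (G' : Set G).Finite ∧
          d ∈ DeltaStar (PMZS (G' : Set G))}) :=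
  ⟨fun ⟨_, hg⟩ => deltaStar_pmzs_univ_of_addOrderOf_eq_zero hg,
    fun h => deltaStar_pmzs_univ_of_isAddTorsion fun g => addOrderOf_ne_zero_iff.1 (h g)⟩
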